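/- arXiv:2306.04210 — 4 statements merged into one kernel-verified Lean document; each statement's English description precedes it below -/
import Mathlib

section
/- If two ω-regular languages (languages accepted by Büchi automata) over a finite alphabet contain exactly the same ultimately periodic words, then they are equal. -/
/-- A (nondeterministic) Büchi automaton over alphabet `σ` with state space `Q`. -/
structure BuchiAutomaton (σ Q : Type) where
  delta : Q → σ → Q → Prop
  init : Set Q
  acc : Set Q

/-- `ρ` is a run of `A` on the infinite word `w`. -/
def BuchiAutomaton.IsRun {σ Q : Type} (A : BuchiAutomaton σ Q) (w : ℕ → σ) (ρ : ℕ → Q) : Prop :=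
  ρ 0 ∈ A.init ∧ ∀ n, A.delta (ρ n) (w n) (ρ (n + 1))

/-- Accepting run: some accepting state occurs infinitely often. -/
def BuchiAutomaton.IsAcceptingRun {σ Q : Type} (A : BuchiAutomaton σ Q) (w : ℕ → σ)
    (ρ : ℕ → Q) : Prop :=
  A.IsRun w ρ ∧ ∀ N, ∃ n, N ≤ n ∧ ρ n ∈ A.acc

/-- The ω-language accepted by `A`. -/
def BuchiAutomaton.Lang {σ Q : Type} (A : BuchiAutomaton σ Q) : Set (ℕ → σ) :=
  {w | ∃ ρ, A.IsAcceptingRun w ρ}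

/-- An ω-language is ω-regular if it is accepted by some Büchi automaton
with finitely many states. -/
def OmegaRegular {σ : Type} (L : Set (ℕ → σ)) : Prop :=
  ∃ (Q : Type) (_ : Fintype Q) (A : BuchiAutomaton σ Q), A.Lang = L

/-- Finite paths: `A.Steps q₁ u q₂` holds iff there is a path from `q₁` to `q₂` reading `u`. -/
def BuchiAutomaton.Steps {σ Q : Type} (A : BuchiAutomaton σ Q) : Q → List σ → Q → Prop
  | q1, [], q2 => q1 = q2
  | q1, a :: u, q2 => ∃ r, A.delta q1 a r ∧ A.Steps r u q2

/-- Concatenation of a finite word with an infinite word. -/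
def catOmega {σ : Type} (u : List σ) (w : ℕ → σ) : ℕ → σ :=
  fun n => if h : n < u.length then u.get ⟨n, h⟩ else w (n - u.length)

/-- The infinite word `v^ω` (meaningful when `v ≠ []`). -/
def omegaPow {σ : Type} [Inhabited σ] (v : List σ) : ℕ → σ :=
  fun n => v.getD (n % v.length) default

/-- Ultimately periodic words: those of the form `u · v^ω` with `v` nonempty. -/
def UltimatelyPeriodic {σ : Type} [Inhabited σ] (w : ℕ → σ) : Prop :=
  ∃ (u v : List σ), v ≠ [] ∧ w = catOmega u (omegaPow v)

namespace UPAux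

/-! ### Segments of infinite words -/

def seg {σ : Type} (w : ℕ → σ) (i d : ℕ) : List σ := List.ofFn fun k : Fin d => w (i + k)

@[simp] lemma seg_length {σ : Type} (w : ℕ → σ) (i d : ℕ) : (seg w i d).length = d := by
  simp [seg]

@[simp] lemma seg_getElem {σ : Type} (w : ℕ → σ) (i d n : ℕ) (h : n < (seg w i d).length) :
    (seg w i d)[n] = w (i + n) := by
  simp [seg] at h ⊢

@[simp] lemma seg_zero {σ : Type} (w : ℕ → σ) (i : ℕ) : seg w i 0 = [] := rfl

lemma seg_succ {σ : Type} (w : ℕ → σ) (i d : ℕ) :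
    seg w i (d + 1) = w i :: seg w (i + 1) d := by
  apply List.ext_getElem <;> simp
  intro n hn
  rcases n with _ | n <;> simp [Nat.add_assoc, Nat.add_comm 1]

lemma seg_add {σ : Type} (w : ℕ → σ) (i d1 d2 : ℕ) :
    seg w i (d1 + d2) = seg w i d1 ++ seg w (i + d1) d2 := by
  induction d1 generalizing i with
  | zero => simp
  | succ d ih =>
    rw [show d + 1 + d2 = (d + d2) + 1 by omega, seg_succ, ih, seg_succ,
      show i + 1 + d = i + (d+1) by omega, List.cons_append]

/-! ### Steps lemmas -/

variable {σ Q : Type} (A : BuchiAutomaton σ Q)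

lemma steps_nil {q q' : Q} : A.Steps q [] q' ↔ q = q' := Iff.rfl

lemma steps_append {u v : List σ} {q q'' : Q} :
    A.Steps q (u ++ v) q'' ↔ ∃ r, A.Steps q u r ∧ A.Steps r v q'' := by
  induction u generalizing q with
  | nil =>
    constructor
    · intro h; exact ⟨q, rfl, h⟩
    · rintro ⟨r, hr, h⟩; cases hr; exact h
  | cons a u ih =>
    constructor
    · intro h
      obtain ⟨r, hr, hs⟩ : ∃ r, A.delta q a r ∧ A.Steps r (u ++ v) q'' := h
      obtain ⟨s, hs1, hs2⟩ := ih.1 hs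
      exact ⟨s, ⟨r, hr, hs1⟩, hs2⟩
    · rintro ⟨s, ⟨r, hr, hs1⟩, hs2⟩
      exact ⟨r, hr, ih.2 ⟨s, hs1, hs2⟩⟩

/-- `StepsAcc q u q'`: a path from `q` to `q'` reading `u` that visits an accepting state. -/
def StepsAcc (q : Q) (u : List σ) (q' : Q) : Prop :=
  ∃ u1 u2 r, u = u1 ++ u2 ∧ A.Steps q u1 r ∧ r ∈ A.acc ∧ A.Steps r u2 q'

lemma StepsAcc.steps {q q' : Q} {u : List σ} (h : StepsAcc A q u q') : A.Steps q u q' := by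
  obtain ⟨u1, u2, r, rfl, h1, _, h2⟩ := h
  exact (steps_append A).2 ⟨r, h1, h2⟩

lemma stepsAcc_comp_left {q r q' : Q} {u v : List σ} (h1 : A.Steps q u r)
    (h2 : StepsAcc A r v q') : StepsAcc A q (u ++ v) q' := by
  obtain ⟨v1, v2, s, rfl, hv1, hs, hv2⟩ := h2
  exact ⟨u ++ v1, v2, s, by simp, (steps_append A).2 ⟨r, h1, hv1⟩, hs, hv2⟩

lemma stepsAcc_comp_right {q r q' : Q} {u v : List σ} (h1 : StepsAcc A q u r)
    (h2 : A.Steps r v q') : StepsAcc A q (u ++ v) q' := by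
  obtain ⟨u1, u2, s, rfl, hu1, hs, hu2⟩ := h1
  exact ⟨u1, u2 ++ v, s, by simp, hu1, hs, (steps_append A).2 ⟨r, hu2, h2⟩⟩

lemma run_steps {w : ℕ → σ} {ρ : ℕ → Q} (hρ : ∀ n, A.delta (ρ n) (w n) (ρ (n + 1))) :
    ∀ d i, A.Steps (ρ i) (seg w i d) (ρ (i + d)) := by
  intro d
  induction d with
  | zero => intro i; rfl
  | succ d ih =>
    intro i
    rw [seg_succ]
    exact ⟨ρ (i + 1), hρ i, by have := ih (i + 1); rwa [show i + 1 + d = i + (d+1) by omega] at this⟩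

/-- From a `Steps` witness, extract a finite run as a function `ℕ → Q`. -/
lemma steps_to_fun {q q' : Q} {u : List σ} (h : A.Steps q u q') :
    ∃ f : ℕ → Q, f 0 = q ∧ f u.length = q' ∧
      ∀ n (hn : n < u.length), A.delta (f n) (u[n]) (f (n + 1)) := by
  induction u generalizing q with
  | nil => exact ⟨fun _ => q, rfl, h, by simp⟩
  | cons a u ih =>
    obtain ⟨r, hr, hs⟩ := h
    obtain ⟨f, hf0, hfl, hf⟩ := ih hs
    refine ⟨fun n => Nat.rec q (fun m _ => f m) n, rfl, hfl, ?_⟩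
    rintro (_ | n) hn
    · simpa [hf0] using hr
    · exact hf n (by simpa using hn)

lemma stepsAcc_to_fun {q q' : Q} {u : List σ} (h : StepsAcc A q u q') :
    ∃ f : ℕ → Q, f 0 = q ∧ f u.length = q' ∧
      (∀ n (hn : n < u.length), A.delta (f n) (u[n]) (f (n + 1))) ∧
      ∃ m ≤ u.length, f m ∈ A.acc := by
  obtain ⟨u1, u2, r, rfl, h1, hr, h2⟩ := h
  obtain ⟨f1, hf10, hf1l, hf1⟩ := steps_to_fun A h1
  obtain ⟨f2, hf20, hf2l, hf2⟩ := steps_to_fun A h2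
  set F : ℕ → Q := fun n => if n < u1.length then f1 n else f2 (n - u1.length) with hF
  have hFmid : F u1.length = r := by simp [hF, hf20]
  have hF0 : F 0 = q := by
    by_cases h : 0 < u1.length
    · simp [hF, h, hf10]
    · have hu1 : u1.length = 0 := by omega
      rw [show (0:ℕ) = u1.length from hu1.symm, hFmid, ← hf1l, hu1, hf10]
  refine ⟨F, hF0, ?_, ?_, u1.length, by simp, hFmid ▸ hr⟩
  · simp only [List.length_append, hF]
    rw [if_neg (by omega), show u1.length + u2.length - u1.length = u2.length by omega, hf2l]
  · intro n hn
    simp only [List.length_append] at hn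
    by_cases hc : n < u1.length
    · have hFn : F n = f1 n := by simp [hF, hc]
      rw [hFn, List.getElem_append_left hc]
      by_cases hc' : n + 1 < u1.length
      · have : F (n+1) = f1 (n+1) := by simp [hF, hc']
        rw [this]; exact hf1 n hc
      · have he : n + 1 = u1.length := by omega
        have : F (n+1) = f1 (n+1) := by rw [he, hFmid, ← hf1l]
        rw [this]; exact hf1 n hc
    · have hFn : F n = f2 (n - u1.length) := by simp [hF, hc]
      have hFn' : F (n+1) = f2 (n - u1.length + 1) := by
        simp only [hF, if_neg (show ¬ n + 1 < u1.length by omega)]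
        congr 1; omega
      rw [hFn, hFn', List.getElem_append_right (by omega)]
      exact hf2 _ (by omega)

/-- Glue finite paths between checkpoints into an accepting run. -/
lemma glue (w : ℕ → σ) (s : ℕ → ℕ) (q : ℕ → Q)
    (hmono : Monotone s) (hs0 : s 0 = 0) (hub : ∀ N, ∃ k, N < s k)
    (hinit : q 0 ∈ A.init)
    (hstep : ∀ k, A.Steps (q k) (seg w (s k) (s (k + 1) - s k)) (q (k + 1)))
    (hacc : ∀ N, ∃ k, N ≤ k ∧ StepsAcc A (q k) (seg w (s k) (s (k + 1) - s k)) (q (k + 1))) :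
    w ∈ A.Lang := by
  set L : ℕ → ℕ := fun k => s (k + 1) - s k with hL
  have hsL : ∀ k, s k + L k = s (k + 1) := fun k => by
    have := hmono (show k ≤ k + 1 by omega); simp [hL]; omega
  -- constant q on stretches where s is constant
  have hqconst : ∀ j k, j ≤ k → s j = s k → q j = q k := by
    intro j k hjk
    induction k, hjk using Nat.le_induction with
    | base => intro _; rfl
    | succ k hk ih =>
      intro hsk
      have h1 : s j ≤ s k := hmono hk
      have h2 : s k ≤ s (k + 1) := hmono (Nat.le_succ k)
      have h3 : s j = s k := by omega
      have h4 : s (k + 1) - s k = 0 := by omega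
      have := hstep k
      rw [h4, seg_zero] at this
      exact (ih h3).trans this
  -- choose finite runs for each block
  have hex : ∀ k, ∃ f : ℕ → Q, f 0 = q k ∧ f (L k) = q (k + 1) ∧
      (∀ n, n < L k → A.delta (f n) (w (s k + n)) (f (n + 1))) ∧
      (StepsAcc A (q k) (seg w (s k) (L k)) (q (k + 1)) → ∃ m ≤ L k, f m ∈ A.acc) := by
    intro k
    by_cases hca : StepsAcc A (q k) (seg w (s k) (L k)) (q (k + 1))
    · obtain ⟨f, hf0, hfl, hfd, hfa⟩ := stepsAcc_to_fun A hca
      refine ⟨f, hf0, by simpa using hfl, ?_, fun _ => by simpa using hfa⟩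
      intro n hn
      have := hfd n (by simpa using hn)
      rwa [seg_getElem] at this
    · obtain ⟨f, hf0, hfl, hfd⟩ := steps_to_fun A (hstep k)
      refine ⟨f, hf0, by simpa using hfl, ?_, fun hc => absurd hc hca⟩
      intro n hn
      have := hfd n (by simpa using hn)
      rwa [seg_getElem] at this
  choose f hf0 hfl hfd hfa using hex
  have hKex : ∀ n : ℕ, ∃ k, n < s (k + 1) := by
    intro n
    obtain ⟨k, hk⟩ := hub n
    match k, hk with
    | 0, hk => omega
    | k + 1, hk => exact ⟨k, hk⟩
  set K : ℕ → ℕ := fun n => Nat.find (hKex n) with hKdef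
  have hKlt : ∀ n, n < s (K n + 1) := fun n => Nat.find_spec (hKex n)
  have hKle : ∀ n, s (K n) ≤ n := by
    intro n
    rcases Nat.eq_zero_or_pos (K n) with h | h
    · rw [h, hs0]; omega
    · have := Nat.find_min (hKex n) (m := K n - 1) (show K n - 1 < K n by omega)
      rw [show K n - 1 + 1 = K n by omega] at this
      omega
  set ρ : ℕ → Q := fun n => f (K n) (n - s (K n)) with hρdef
  have rho_at : ∀ k m, m ≤ L k → ρ (s k + m) = f k m := by
    intro k m hm
    rcases Nat.lt_or_ge m (L k) with hlt | hge
    · have hpos : s k + m < s (k + 1) := by have := hsL k; omega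
      have hk1 : K (s k + m) ≤ k := Nat.find_le hpos
      have hk2 : k ≤ K (s k + m) := by
        by_contra hc
        have h1 : K (s k + m) + 1 ≤ k := by omega
        have := hmono h1
        have := hKlt (s k + m)
        omega
      have hkk : K (s k + m) = k := le_antisymm hk1 hk2
      simp only [hρdef]
      rw [hkk]
      congr 1
      omega
    · have hm' : m = L k := by omega
      subst hm'
      have hpos : s k + L k = s (k + 1) := hsL k
      set n := s k + L k with hn
      have hk2 : k + 1 ≤ K n := by
        by_contra hc
        have h1 : K n + 1 ≤ k + 1 := by omega
        have := hmono h1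
        have := hKlt n
        omega
      have hseq : s (K n) = s (k + 1) := by
        have h1 := hmono hk2
        have h2 := hKle n
        omega
      have : ρ n = q (K n) := by
        simp only [hρdef]
        rw [show n - s (K n) = 0 by omega, hf0]
      rw [this, hfl]
      exact (hqconst (k + 1) (K n) hk2 hseq.symm).symm
  refine ⟨ρ, ⟨?_, ?_⟩, ?_⟩
  · have := rho_at 0 0 (by omega)
    rw [hs0] at this
    have e : ρ 0 = q 0 := by simpa [hf0] using this
    rw [e]; exact hinit
  · intro n
    set k := K n with hk
    have h1 : s k ≤ n := hKle n
    have h2 : n < s (k + 1) := hKlt n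
    set m := n - s k with hm
    have hmlt : m < L k := by have := hsL k; omega
    have e1 : ρ n = f k m := by rw [show n = s k + m by omega]; exact rho_at k m (by omega)
    have e2 : ρ (n + 1) = f k (m + 1) := by
      rw [show n + 1 = s k + (m + 1) by omega]; exact rho_at k (m + 1) (by omega)
    rw [e1, e2, show w n = w (s k + m) by rw [show s k + m = n by omega]]
    exact hfd k m hmlt
  · intro N
    obtain ⟨k, hk1, hk2⟩ := hacc (K N + 1)
    obtain ⟨m, hm1, hm2⟩ := hfa k hk2
    refine ⟨s k + m, ?_, ?_⟩
    · have h1 := hmono hk1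
      have h2 := hKlt N
      omega
    · rw [rho_at k m hm1]; exact hm2

/-- Extract checkpoint path data from an accepting run. -/
lemma extract (w : ℕ → σ) (ρ : ℕ → Q) (hρ : A.IsAcceptingRun w ρ) (t : ℕ → ℕ)
    (ht : StrictMono t) :
    A.Steps (ρ 0) (seg w 0 (t 0)) (ρ (t 0)) ∧
    (∀ k, A.Steps (ρ (t k)) (seg w (t k) (t (k + 1) - t k)) (ρ (t (k + 1)))) ∧
    (∀ N, ∃ k, N ≤ k ∧ StepsAcc A (ρ (t k)) (seg w (t k) (t (k + 1) - t k)) (ρ (t (k + 1)))) := by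
  have hrun := hρ.1.2
  refine ⟨by simpa using run_steps A hrun (t 0) 0, fun k => ?_, fun N => ?_⟩
  · have := run_steps A hrun (t (k + 1) - t k) (t k)
    rwa [show t k + (t (k + 1) - t k) = t (k + 1) by
      have := (ht (show k < k + 1 by omega)).le; omega] at this
  · obtain ⟨n, hn1, hn2⟩ := hρ.2 (t N)
    have hKex : ∃ j, n < t (j + 1) :=
      ⟨n, lt_of_lt_of_le (Nat.lt_succ_self n) ht.le_apply⟩
    set k := Nat.find hKex with hkdef
    have hklt : n < t (k + 1) := Nat.find_spec hKex
    have hkle : t k ≤ n := by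
      rcases Nat.eq_zero_or_pos k with h | h
      · rw [h]; exact le_trans (ht.monotone (Nat.zero_le N)) hn1
      · have := Nat.find_min hKex (m := k - 1) (show k - 1 < k by omega)
        rw [show k - 1 + 1 = k by omega] at this
        omega
    have hkN : N ≤ k := by
      by_contra hc
      have : t (k + 1) ≤ t N := ht.monotone (by omega)
      omega
    have htk1 : t k ≤ t (k + 1) := (ht (show k < k + 1 by omega)).le
    refine ⟨k, hkN, seg w (t k) (n - t k), seg w n (t (k + 1) - n), ρ n, ?_, ?_, hn2, ?_⟩
    · rw [show t (k + 1) - t k = (n - t k) + (t (k + 1) - n) by omega, seg_add,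
        show t k + (n - t k) = n by omega]
    · have := run_steps A hrun (n - t k) (t k)
      rwa [show t k + (n - t k) = n by omega] at this
    · have := run_steps A hrun (t (k + 1) - n) n
      rwa [show n + (t (k + 1) - n) = t (k + 1) by omega] at this

/-! ### Blocks of `u · v^ω` -/

lemma catOmega_seg_prefix {σ : Type} [Inhabited σ] (u v : List σ) :
    seg (catOmega u (omegaPow v)) 0 u.length = u := by
  apply List.ext_getElem
  · simp
  · intro n h1 h2
    rw [seg_getElem]
    simp only [catOmega, Nat.zero_add]
    rw [dif_pos h2]
    rfl

lemma catOmega_seg_block {σ : Type} [Inhabited σ] (u v : List σ) (hv : v ≠ []) (j : ℕ) :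
    seg (catOmega u (omegaPow v)) (u.length + j * v.length) v.length = v := by
  have hvl : 0 < v.length := List.length_pos_iff.mpr hv
  apply List.ext_getElem
  · simp
  · intro n h1 h2
    rw [seg_getElem]
    simp only [catOmega]
    rw [dif_neg (by omega)]
    have he : u.length + j * v.length + n - u.length = j * v.length + n := by omega
    rw [he]
    simp only [omegaPow]
    rw [Nat.add_comm (j * v.length) n, Nat.add_mul_mod_self_right, Nat.mod_eq_of_lt (by omega)]
    exact List.getD_eq_getElem v default (by omega)

/-! ### Key lemma -/

lemma exists_infinite_fiber' {C : Type} [Finite C] (f : ℕ → C) :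
    ∃ c, {n | f n = c}.Infinite := by
  by_contra hc
  push_neg at hc
  have : (Set.univ : Set ℕ).Finite := by
    have h : (Set.univ : Set ℕ) = ⋃ c, {n | f n = c} := by ext n; simp
    rw [h]; exact Set.finite_iUnion hc
  exact Set.infinite_univ this

lemma key {σ Q : Type} [Inhabited σ] [Finite Q] (A : BuchiAutomaton σ Q) (w : ℕ → σ)
    (φ : ℕ → ℕ) (hφ : StrictMono φ)
    (hR : ∀ k l k' l', k < l → k' < l' → ∀ q q',
      A.Steps q (seg w (φ k) (φ l - φ k)) q' ↔ A.Steps q (seg w (φ k') (φ l' - φ k')) q')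
    (hS : ∀ k l k' l', k < l → k' < l' → ∀ q q',
      StepsAcc A q (seg w (φ k) (φ l - φ k)) q' ↔ StepsAcc A q (seg w (φ k') (φ l' - φ k')) q') :
    (w ∈ A.Lang ↔ catOmega (seg w 0 (φ 0)) (omegaPow (seg w (φ 0) (φ 1 - φ 0))) ∈ A.Lang) := by
  set u : List σ := seg w 0 (φ 0) with hu
  set v : List σ := seg w (φ 0) (φ 1 - φ 0) with hv
  have hφ01 : φ 0 < φ 1 := hφ (by omega)
  have hvlen : v.length = φ 1 - φ 0 := by simp [hv]
  have hvpos : 0 < v.length := by omega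
  have hvne : v ≠ [] := by
    intro h; rw [h] at hvlen; simp at hvlen; omega
  have hulen : u.length = φ 0 := by simp [hu]
  set W : ℕ → σ := catOmega u (omegaPow v) with hW
  constructor
  · rintro ⟨ρ, hρ⟩
    obtain ⟨h0, hb, ha⟩ := extract A w ρ hρ φ hφ
    set p : ℕ → Q := fun k => ρ (φ k) with hp
    -- pigeonhole on states
    obtain ⟨qq, hqq⟩ := exists_infinite_fiber' p
    obtain ⟨k, hkS, hk1⟩ := hqq.exists_gt 0
    obtain ⟨j, hjk, hj⟩ := ha k
    obtain ⟨l, hlS, hlj⟩ := hqq.exists_gt j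
    -- composite accepting loop on segment (φ k, φ l)
    have hkj : φ k ≤ φ j := hφ.monotone hjk
    have hjl : φ (j + 1) ≤ φ l := hφ.monotone (by omega)
    have hj1 : φ j ≤ φ (j + 1) := hφ.monotone (by omega)
    have hsteps1 : A.Steps (p k) (seg w (φ k) (φ j - φ k)) (p j) := by
      have := run_steps A hρ.1.2 (φ j - φ k) (φ k)
      rwa [show φ k + (φ j - φ k) = φ j by omega] at this
    have hsteps2 : A.Steps (p (j + 1)) (seg w (φ (j + 1)) (φ l - φ (j + 1))) (p l) := by
      have := run_steps A hρ.1.2 (φ l - φ (j + 1)) (φ (j + 1))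
      rwa [show φ (j + 1) + (φ l - φ (j + 1)) = φ l by omega] at this
    have hloop : StepsAcc A (p k) (seg w (φ k) (φ l - φ k)) (p l) := by
      have h1 : StepsAcc A (p k) (seg w (φ k) (φ j - φ k) ++ seg w (φ j) (φ (j + 1) - φ j))
          (p (j + 1)) := stepsAcc_comp_left A hsteps1 hj
      have h2 : StepsAcc A (p k)
          ((seg w (φ k) (φ j - φ k) ++ seg w (φ j) (φ (j + 1) - φ j)) ++
            seg w (φ (j + 1)) (φ l - φ (j + 1))) (p l) := stepsAcc_comp_right A h1 hsteps2
      have e : seg w (φ k) (φ l - φ k) =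
          (seg w (φ k) (φ j - φ k) ++ seg w (φ j) (φ (j + 1) - φ j)) ++
            seg w (φ (j + 1)) (φ l - φ (j + 1)) := by
        rw [show φ l - φ k = ((φ j - φ k) + (φ (j + 1) - φ j)) + (φ l - φ (j + 1)) by omega,
          seg_add, seg_add, show φ k + (φ j - φ k) = φ j by omega,
          show φ k + (φ j - φ k + (φ (j + 1) - φ j)) = φ (j + 1) by omega]
      rw [e]; exact h2
    have hkq : p k = qq := hkS
    have hlq : p l = qq := hlS
    rw [hkq, hlq] at hloop
    have hloopv : StepsAcc A qq v qq :=
      (hS k l 0 1 (by omega) (by omega) qq qq).mp hloop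
    have hfirst : A.Steps (p 0) (seg w (φ 0) (φ k - φ 0)) qq := by
      have := run_steps A hρ.1.2 (φ k - φ 0) (φ 0)
      rw [show φ 0 + (φ k - φ 0) = φ k by have := hφ.monotone (Nat.zero_le k); omega] at this
      rw [← hkq]
      exact this
    have hfirstv : A.Steps (p 0) v qq := (hR 0 k 0 1 (by omega) (by omega) _ _).mp hfirst
    -- glue
    set s : ℕ → ℕ := fun m => match m with
      | 0 => 0
      | m + 1 => u.length + m * v.length with hs
    set r : ℕ → Q := fun m => match m with
      | 0 => ρ 0
      | 1 => p 0
      | _ + 2 => qq with hr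
    have hblockW : ∀ m : ℕ, seg W (s (m + 1)) (s (m + 2) - s (m + 1)) = v := by
      intro m
      have : s (m + 2) - s (m + 1) = v.length := by
        simp only [hs]; ring_nf; omega
      rw [this]
      exact catOmega_seg_block u v hvne m
    refine glue A W s r ?_ rfl ?_ hρ.1.1 ?_ ?_
    · apply monotone_nat_of_le_succ
      intro m
      match m with
      | 0 => simp [hs]
      | m + 1 => simp only [hs]; nlinarith
    · intro N
      exact ⟨N + 2, by simp only [hs]; nlinarith⟩
    · intro m
      match m with
      | 0 =>
        have : seg W (s 0) (s 1 - s 0) = u := by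
          simp only [hs]
          rw [show u.length + 0 * v.length - 0 = u.length by omega]
          exact catOmega_seg_prefix u v
        rw [this]
        simpa [hr, hulen] using h0
      | 1 =>
        rw [hblockW 0]
        exact hfirstv
      | m + 2 =>
        rw [hblockW (m + 1)]
        exact hloopv.steps
    · intro N
      refine ⟨N + 2, by omega, ?_⟩
      have hN : N + 2 = (N + 1) + 1 := by omega
      rw [hN, hblockW (N + 1)]
      exact hloopv
  · rintro ⟨ρ, hρ⟩
    set t : ℕ → ℕ := fun m => u.length + m * v.length with ht
    have htmono : StrictMono t := by
      apply strictMono_nat_of_lt_succ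
      intro m
      simp only [ht]
      nlinarith
    obtain ⟨h0, hb, ha⟩ := extract A W ρ hρ t htmono
    set p : ℕ → Q := fun m => ρ (t m) with hp
    have hblockW : ∀ m : ℕ, seg W (t m) (t (m + 1) - t m) = v := by
      intro m
      have : t (m + 1) - t m = v.length := by simp only [ht]; ring_nf; omega
      rw [this]
      exact catOmega_seg_block u v hvne m
    have h0' : A.Steps (ρ 0) u (p 0) := by
      have : seg W 0 (t 0) = u := by
        simp only [ht]
        rw [show u.length + 0 * v.length = u.length by omega]
        exact catOmega_seg_prefix u v
      rwa [this] at h0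
    have hbv : ∀ m, A.Steps (p m) v (p (m + 1)) := fun m => by
      have := hb m; rwa [hblockW m] at this
    set s : ℕ → ℕ := fun k => match k with
      | 0 => 0
      | k + 1 => φ k with hs
    set r : ℕ → Q := fun k => match k with
      | 0 => ρ 0
      | k + 1 => p k with hr
    refine glue A w s r ?_ rfl ?_ hρ.1.1 ?_ ?_
    · apply monotone_nat_of_le_succ
      intro k
      match k with
      | 0 => simp [hs]
      | k + 1 => exact (hφ (show k < k + 1 by omega)).le
    · intro N
      refine ⟨N + 2, ?_⟩
      have : N + 1 ≤ φ (N + 1) := hφ.le_apply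
      simp only [hs]
      omega
    · intro k
      match k with
      | 0 =>
        simp only [hs, hr]
        rw [show φ 0 - 0 = φ 0 by omega]
        exact h0'
      | k + 1 =>
        simp only [hs, hr]
        exact (hR k (k + 1) 0 1 (by omega) (by omega) _ _).mpr (hbv k)
    · intro N
      obtain ⟨m, hm, hmacc⟩ := ha N
      have hmacc' : StepsAcc A (p m) v (p (m + 1)) := by
        have := hmacc; rwa [hblockW m] at this
      refine ⟨m + 1, by omega, ?_⟩
      simp only [hs, hr]
      exact (hS m (m + 1) 0 1 (by omega) (by omega) _ _).mpr hmacc'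

/-! ### Infinite Ramsey theorem for pairs -/

lemma exists_strictMono_in {S : Set ℕ} (h : S.Infinite) :
    ∃ e : ℕ → ℕ, StrictMono e ∧ ∀ n, e n ∈ S := by
  choose f hf hf' using fun a => h.exists_gt a
  refine ⟨fun n => Nat.rec (f 0) (fun _ x => f x) n,
    strictMono_nat_of_lt_succ fun n => hf' _, fun n => ?_⟩
  cases n <;> exact hf _

lemma ramsey_pairs {C : Type} [Finite C] (c : ℕ → ℕ → C) :
    ∃ φ : ℕ → ℕ, StrictMono φ ∧
      ∀ k l k' l', k < l → k' < l' → c (φ k) (φ l) = c (φ k') (φ l') := by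
  -- one refinement step
  have helper : ∀ S : Set ℕ, S.Infinite → ∃ a T, a ∈ S ∧ (T : Set ℕ).Infinite ∧ T ⊆ S ∧
      (∀ m ∈ T, a < m) ∧ ∀ m m', m ∈ T → m' ∈ T → c a m = c a m' := by
    intro S hS
    obtain ⟨a, ha⟩ := hS.nonempty
    have hS' : {m ∈ S | a < m}.Infinite := by
      have : {m ∈ S | a < m} = S \ {m | m ≤ a} := by
        ext m
        simp only [Set.mem_setOf_eq, Set.mem_diff]
        constructor <;> rintro ⟨hm1, hm2⟩ <;> exact ⟨hm1, by omega⟩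
      rw [this]
      exact hS.diff (Set.finite_Iic a)
    have : ∃ d, {m ∈ {m ∈ S | a < m} | c a m = d}.Infinite := by
      by_contra hc
      push_neg at hc
      have : {m ∈ S | a < m} = ⋃ d, {m ∈ {m ∈ S | a < m} | c a m = d} := by
        ext m; simp
      rw [this] at hS'
      exact hS' (Set.finite_iUnion hc)
    obtain ⟨d, hd⟩ := this
    refine ⟨a, _, ha, hd, fun m hm => hm.1.1, fun m hm => hm.1.2, ?_⟩
    intro m m' hm hm'
    rw [hm.2, hm'.2]
  choose aF TF h1 h2 h3 h4 h5 using helper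
  set chain : ℕ → {S : Set ℕ // S.Infinite} := fun n =>
    Nat.rec ⟨Set.univ, Set.infinite_univ⟩ (fun _ p => ⟨TF p.1 p.2, h2 p.1 p.2⟩) n with hchain
  set a : ℕ → ℕ := fun n => aF (chain n).1 (chain n).2 with ha
  have hchain_succ : ∀ n, (chain (n + 1)).1 = TF (chain n).1 (chain n).2 := fun n => rfl
  have hanti : ∀ j k, j ≤ k → (chain k).1 ⊆ (chain j).1 := by
    intro j k hjk
    induction k, hjk using Nat.le_induction with
    | base => exact subset_rfl
    | succ k hk ih =>
      refine subset_trans ?_ ih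
      rw [hchain_succ]
      exact h3 _ _
  have hmem : ∀ n, a n ∈ (chain n).1 := fun n => h1 _ _
  have hmem' : ∀ j k, j < k → a k ∈ TF (chain j).1 (chain j).2 := by
    intro j k hjk
    rw [← hchain_succ]
    exact hanti (j + 1) k hjk (hmem k)
  have hamono : StrictMono a := fun j k hjk => h4 _ _ _ (hmem' j k hjk)
  set d : ℕ → C := fun j => c (a j) (a (j + 1)) with hd
  have hcd : ∀ j k, j < k → c (a j) (a k) = d j := by
    intro j k hjk
    exact h5 _ _ _ _ (hmem' j k hjk) (hmem' j (j + 1) (by omega))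
  obtain ⟨col, hcol⟩ := exists_infinite_fiber' d
  obtain ⟨e, he, heS⟩ := exists_strictMono_in hcol
  refine ⟨a ∘ e, hamono.comp he, ?_⟩
  intro k l k' l' hkl hkl'
  have e1 : c (a (e k)) (a (e l)) = col := by
    rw [hcd (e k) (e l) (he hkl)]
    exact heS k
  have e2 : c (a (e k')) (a (e l')) = col := by
    rw [hcd (e k') (e l') (he hkl')]
    exact heS k'
  simp only [Function.comp]
  rw [e1, e2]

/-! ### For every word there is an equivalent ultimately periodic word -/

lemma exists_up_equiv {σ Q₁ Q₂ : Type} [Inhabited σ] [Finite Q₁] [Finite Q₂]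
    (A₁ : BuchiAutomaton σ Q₁) (A₂ : BuchiAutomaton σ Q₂) (w : ℕ → σ) :
    ∃ w', UltimatelyPeriodic w' ∧ (w ∈ A₁.Lang ↔ w' ∈ A₁.Lang) ∧
      (w ∈ A₂.Lang ↔ w' ∈ A₂.Lang) := by
  set C := ((Q₁ → Q₁ → Prop) × (Q₁ → Q₁ → Prop)) × ((Q₂ → Q₂ → Prop) × (Q₂ → Q₂ → Prop))
    with hC
  have : Finite C := by infer_instance
  set c : ℕ → ℕ → C := fun i j =>
    ((fun q q' => A₁.Steps q (seg w i (j - i)) q',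
      fun q q' => StepsAcc A₁ q (seg w i (j - i)) q'),
     (fun q q' => A₂.Steps q (seg w i (j - i)) q',
      fun q q' => StepsAcc A₂ q (seg w i (j - i)) q')) with hc
  obtain ⟨φ, hφ, hcol⟩ := ramsey_pairs c
  have hR₁ : ∀ k l k' l', k < l → k' < l' → ∀ q q',
      A₁.Steps q (seg w (φ k) (φ l - φ k)) q' ↔ A₁.Steps q (seg w (φ k') (φ l' - φ k')) q' := by
    intro k l k' l' h h' q q'
    exact iff_of_eq (congrFun (congrFun (congrArg (fun x => x.1.1) (hcol k l k' l' h h')) q) q')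
  have hS₁ : ∀ k l k' l', k < l → k' < l' → ∀ q q',
      StepsAcc A₁ q (seg w (φ k) (φ l - φ k)) q' ↔
        StepsAcc A₁ q (seg w (φ k') (φ l' - φ k')) q' := by
    intro k l k' l' h h' q q'
    exact iff_of_eq (congrFun (congrFun (congrArg (fun x => x.1.2) (hcol k l k' l' h h')) q) q')
  have hR₂ : ∀ k l k' l', k < l → k' < l' → ∀ q q',
      A₂.Steps q (seg w (φ k) (φ l - φ k)) q' ↔ A₂.Steps q (seg w (φ k') (φ l' - φ k')) q' := by
    intro k l k' l' h h' q q'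
    exact iff_of_eq (congrFun (congrFun (congrArg (fun x => x.2.1) (hcol k l k' l' h h')) q) q')
  have hS₂ : ∀ k l k' l', k < l → k' < l' → ∀ q q',
      StepsAcc A₂ q (seg w (φ k) (φ l - φ k)) q' ↔
        StepsAcc A₂ q (seg w (φ k') (φ l' - φ k')) q' := by
    intro k l k' l' h h' q q'
    exact iff_of_eq (congrFun (congrFun (congrArg (fun x => x.2.2) (hcol k l k' l' h h')) q) q')
  refine ⟨catOmega (seg w 0 (φ 0)) (omegaPow (seg w (φ 0) (φ 1 - φ 0))), ?_, ?_, ?_⟩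
  · refine ⟨seg w 0 (φ 0), seg w (φ 0) (φ 1 - φ 0), ?_, rfl⟩
    intro hnil
    have := congrArg List.length hnil
    simp only [seg_length, List.length_nil] at this
    have := hφ (show 0 < 1 by omega)
    omega
  · exact key A₁ w φ hφ hR₁ hS₁
  · exact key A₂ w φ hφ hR₂ hS₂

end UPAux

theorem omegaRegular_eq_of_ultimatelyPeriodic_agree {σ : Type} [Fintype σ] [Inhabited σ]
    (L₁ L₂ : Set (ℕ → σ)) (h₁ : OmegaRegular L₁) (h₂ : OmegaRegular L₂)
    (h : ∀ w : ℕ → σ, UltimatelyPeriodic w → (w ∈ L₁ ↔ w ∈ L₂)) :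
    L₁ = L₂ := by
  obtain ⟨Q₁, F₁, A₁, hA₁⟩ := h₁
  obtain ⟨Q₂, F₂, A₂, hA₂⟩ := h₂
  subst hA₁ hA₂
  ext w
  obtain ⟨w', hup, e1, e2⟩ := UPAux.exists_up_equiv A₁ A₂ w
  rw [e1, e2]
  exact h w' hup
end

section
/- For a Büchi automaton A over alphabet {0,1}^{k+ℓ} recognizing a set of valid encodings (each accepting run uses, for each first-order tape i ≤ k, exactly one transition whose i-th component is 1), there exists an equivalent Büchi automaton accepting the same language in which no transition with a 1 in a first-order component lies on a cycle. -/
section Aux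

variable {σ Q : Type}

/-- Monotonicity of the second component along steps of the augmented automaton. -/
theorem aug_steps_mono {k : ℕ} (A : BuchiAutomaton σ Q)
    (act : σ → Finset (Fin k))
    (A' : BuchiAutomaton σ (Q × Finset (Fin k)))
    (hA' : ∀ p a p', A'.delta p a p' →
      (Disjoint (act a) p.2 ∧ p'.2 = p.2 ∪ act a)) :
    ∀ (u : List σ) (p p' : Q × Finset (Fin k)), A'.Steps p u p' → p.2 ⊆ p'.2 := by
  intro u
  induction u with
  | nil => intro p p' h; cases h; exact Finset.Subset.refl _
  | cons a u ih =>
    intro p p' h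
    obtain ⟨r, hd, hs⟩ := h
    have := (hA' _ _ _ hd).2
    have h1 : p.2 ⊆ r.2 := by rw [this]; exact Finset.subset_union_left
    exact h1.trans (ih r p' hs)

end Aux

theorem valid_encoding_automaton_no_firstorder_transition_on_cycle
    (k ℓ : ℕ) (Q : Type) [Fintype Q]
    (A : BuchiAutomaton (Fin (k + ℓ) → Bool) Q)
    (hvalid : ∀ (w : ℕ → Fin (k + ℓ) → Bool) (ρ : ℕ → Q),
      A.IsAcceptingRun w ρ → ∀ i : Fin k, ∃! n : ℕ, w n (Fin.castAdd ℓ i) = true) :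
    ∃ (Q' : Type) (_ : Fintype Q') (A' : BuchiAutomaton (Fin (k + ℓ) → Bool) Q'),
      A'.Lang = A.Lang ∧
      ∀ (q₁ q₂ : Q') (a : Fin (k + ℓ) → Bool), A'.delta q₁ a q₂ →
        (∃ i : Fin k, a (Fin.castAdd ℓ i) = true) →
        ¬ ∃ u : List (Fin (k + ℓ) → Bool), A'.Steps q₂ u q₁ := by
  classical
  -- set of first-order variables activated by a letter
  set act : (Fin (k + ℓ) → Bool) → Finset (Fin k) :=
    fun a => Finset.univ.filter (fun i => a (Fin.castAdd ℓ i) = true) with hact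
  refine ⟨Q × Finset (Fin k), inferInstance, ?_⟩
  set A' : BuchiAutomaton (Fin (k + ℓ) → Bool) (Q × Finset (Fin k)) :=
    { delta := fun p a p' =>
        A.delta p.1 a p'.1 ∧ Disjoint (act a) p.2 ∧ p'.2 = p.2 ∪ act a,
      init := {p | p.1 ∈ A.init ∧ p.2 = ∅},
      acc := {p | p.1 ∈ A.acc} } with hA'
  have hdelta : ∀ (p : Q × Finset (Fin k)) a p', A'.delta p a p' →
      (Disjoint (act a) p.2 ∧ p'.2 = p.2 ∪ act a) := fun p a p' h => h.2
  refine ⟨A', ?_, ?_⟩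
  · ext w
    constructor
    · rintro ⟨ρ', ⟨⟨hinit, hstep⟩, hacc⟩⟩
      refine ⟨fun n => (ρ' n).1, ⟨?_, ?_⟩, ?_⟩
      · exact hinit.1
      · intro n; exact (hstep n).1
      · intro N; obtain ⟨n, hn, ha⟩ := hacc N; exact ⟨n, hn, ha⟩
    · rintro ⟨ρ, hρ⟩
      have huniq := hvalid w ρ hρ
      obtain ⟨⟨hinit, hstep⟩, hacc⟩ := hρ
      set S : ℕ → Finset (Fin k) :=
        fun n => Finset.univ.filter (fun i => ∃ m < n, w m (Fin.castAdd ℓ i) = true) with hS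
      refine ⟨fun n => (ρ n, S n), ⟨?_, ?_⟩, ?_⟩
      · exact ⟨hinit, by simp [hS]⟩
      · intro n
        refine ⟨hstep n, ?_, ?_⟩
        · rw [Finset.disjoint_left]
          intro i hi hiS
          simp only [hact, Finset.mem_filter, Finset.mem_univ, true_and] at hi
          simp only [hS, Finset.mem_filter, Finset.mem_univ, true_and] at hiS
          obtain ⟨m, hm, hw⟩ := hiS
          obtain ⟨n0, _, hu⟩ := huniq i
          have h1 := hu m hw
          have h2 := hu n hi
          omega
        · show S (n + 1) = S n ∪ act (w n)
          ext i
          simp only [hS, hact, Finset.mem_union, Finset.mem_filter, Finset.mem_univ, true_and]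
          constructor
          · rintro ⟨m, hm, hw⟩
            rcases Nat.lt_succ_iff_lt_or_eq.mp hm with h | h
            · exact Or.inl ⟨m, h, hw⟩
            · exact Or.inr (h ▸ hw)
          · rintro (⟨m, hm, hw⟩ | hw)
            · exact ⟨m, Nat.lt_succ_of_lt hm, hw⟩
            · exact ⟨n, Nat.lt_succ_self n, hw⟩
      · intro N; obtain ⟨n, hn, ha⟩ := hacc N; exact ⟨n, hn, ha⟩
  · rintro p₁ p₂ a hd ⟨i, hi⟩ ⟨u, hu⟩
    have hi' : i ∈ act a := by
      simp [hact, hi]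
    have hnot : i ∉ p₁.2 := Finset.disjoint_left.mp hd.2.1 hi'
    have hmem : i ∈ p₂.2 := by
      rw [hd.2.2]; exact Finset.mem_union_right _ hi'
    exact hnot (aug_steps_mono A act A' hdelta u p₂ p₁ hu hmem)
end

section
/- Conversely, if an ultimately periodic word u·v^ω is accepted by a Büchi automaton A, then there exist a state q, an accepting state visited on a cycle, integers m ≥ 0 and p > 0, and a path from an initial state to q reading u·v^m, together with a cycle from q to q reading v^p that visits an accepting state. -/
namespace BuchiAutomaton

variable {σ Q : Type} (A : BuchiAutomaton σ Q)

theorem steps_map_range' {w : ℕ → σ} {ρ : ℕ → Q} (hρ : ∀ n, A.delta (ρ n) (w n) (ρ (n + 1)))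
    (i k : ℕ) : A.Steps (ρ i) ((List.range' i k).map w) (ρ (i + k)) := by
  induction k generalizing i with
  | zero => rfl
  | succ k ih =>
    rw [List.range'_succ, List.map_cons, ← Nat.add_assoc, Nat.add_right_comm]
    exact ⟨ρ (i + 1), hρ i, ih (i + 1)⟩

end BuchiAutomaton

theorem exists_repeat_with_mem_between {Q : Type} [Finite Q] {S : Set Q} (ρ : ℕ → Q)
    (hS : ∀ N, ∃ n, N ≤ n ∧ ρ n ∈ S) (c : ℕ → ℕ) (hc : ∀ k, k ≤ c k) :
    ∃ k₁ k₂ n, k₁ < k₂ ∧ c k₁ ≤ n ∧ n ≤ c k₂ ∧ ρ n ∈ S ∧ ρ (c k₁) = ρ (c k₂) := by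
  obtain ⟨q, hq⟩ := Finite.exists_infinite_fiber (ρ ∘ c)
  have hfib := Set.infinite_coe_iff.mp hq
  obtain ⟨k₁, hk₁⟩ := hfib.nonempty
  obtain ⟨n, hn, hnS⟩ := hS (c k₁)
  obtain ⟨k₂, hk₂, hlt⟩ := hfib.exists_gt (n + k₁)
  have hq₁ : ρ (c k₁) = q := hk₁
  have hq₂ : ρ (c k₂) = q := hk₂
  exact ⟨k₁, k₂, n, by omega, hn, by linarith [hc k₂], hnS, hq₁.trans hq₂.symm⟩

theorem List.range'_append_range'_of_le {a b c : ℕ} (hab : a ≤ b) (hbc : b ≤ c) :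
    List.range' a (b - a) ++ List.range' b (c - b) = List.range' a (c - a) := by
  have h := List.range'_append (s := a) (m := b - a) (n := c - b) (step := 1)
  rwa [one_mul, Nat.add_sub_cancel' hab, Nat.add_comm, Nat.sub_add_sub_cancel hbc hab] at h

section Words

variable {σ : Type}

theorem map_range'_catOmega_length_add (u : List σ) (x : ℕ → σ) (i k : ℕ) :
    (List.range' (u.length + i) k).map (catOmega u x) = (List.range' i k).map x := by
  rw [← List.map_add_range', List.map_map]
  congr 1
  funext j
  simp [catOmega]

theorem map_range'_catOmega_zero (u : List σ) (x : ℕ → σ) (k : ℕ) :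
    (List.range' 0 (u.length + k)).map (catOmega u x) = u ++ (List.range' 0 k).map x := by
  rw [← List.range'_append, List.map_append, one_mul, zero_add, ← add_zero u.length,
    map_range'_catOmega_length_add]
  congr 1
  refine List.ext_getElem (by simp) fun j hj _ => ?_
  simp_all [catOmega]

variable [Inhabited σ] (v : List σ)

theorem map_range'_omegaPow_period (a : ℕ) :
    (List.range' (a * v.length) v.length).map (omegaPow v) = v := by
  refine List.ext_getElem (by simp) fun j hj hj' => ?_
  simp [omegaPow, Nat.mod_eq_of_lt hj', hj']

theorem map_range'_omegaPow (a p : ℕ) :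
    (List.range' (a * v.length) (p * v.length)).map (omegaPow v) =
      (List.replicate p v).flatten := by
  induction p generalizing a with
  | zero => simp
  | succ p ih =>
    rw [Nat.succ_mul, Nat.add_comm, ← List.range'_append, List.map_append, one_mul,
      ← Nat.succ_mul, ih, map_range'_omegaPow_period, List.replicate_succ, List.flatten_cons]

end Words

theorem accepted_ultimately_periodic_yields_lasso {σ Q : Type} [Inhabited σ] [Fintype Q]
    (A : BuchiAutomaton σ Q) (u v : List σ) (hv : v ≠ [])
    (hacc : catOmega u (omegaPow v) ∈ A.Lang) :
    ∃ (q : Q) (m p : ℕ), 0 < p ∧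
      (∃ q₀ ∈ A.init, A.Steps q₀ (u ++ (List.replicate m v).flatten) q) ∧
      ∃ qF ∈ A.acc, ∃ v₁ v₂ : List σ,
        v₁ ++ v₂ = (List.replicate p v).flatten ∧
        A.Steps q v₁ qF ∧ A.Steps qF v₂ q := by
  obtain ⟨ρ, ⟨hinit, hstep⟩, hinf⟩ := hacc
  have hl : 0 < v.length := List.length_pos_iff.mpr hv
  obtain ⟨k₁, k₂, n, hk, hn₁, hn₂, hF, hq⟩ := exists_repeat_with_mem_between ρ hinf
    (fun k => u.length + k * v.length) fun k => by nlinarith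
  set w := catOmega u (omegaPow v)
  set c₁ := u.length + k₁ * v.length
  set c₂ := u.length + k₂ * v.length
  refine ⟨ρ c₁, k₁, k₂ - k₁, by omega, ⟨ρ 0, hinit, ?_⟩, ρ n, hF,
    (List.range' c₁ (n - c₁)).map w, (List.range' n (c₂ - n)).map w, ?_, ?_, ?_⟩
  · have h := A.steps_map_range' hstep 0 c₁
    rwa [zero_add, map_range'_catOmega_zero, ← zero_mul v.length, map_range'_omegaPow,
      zero_mul] at h
  · have hc : c₂ - c₁ = (k₂ - k₁) * v.length := by simp only [c₁, c₂, Nat.sub_mul]; omega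
    rw [← List.map_append, List.range'_append_range'_of_le hn₁ hn₂, hc,
      map_range'_catOmega_length_add, map_range'_omegaPow]
  · simpa [Nat.add_sub_cancel' hn₁] using A.steps_map_range' hstep c₁ (n - c₁)
  · simpa [Nat.add_sub_cancel' hn₂, hq] using A.steps_map_range' hstep n (c₂ - n)
end

section
/- For every n ≥ 1 there is a language L over {0,1} (namely the set of characteristic words of subsets P ⊆ ℕ that are periodic with period n, i.e., ∀k, k ∈ P ↔ k+n ∈ P) such that any Büchi automaton accepting L has at least 2^n states. -/
theorem periodic_language_buchi_lower_bound (n : ℕ) (hn : 1 ≤ n)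
    (Q : Type) [Fintype Q] (A : BuchiAutomaton Bool Q)
    (hA : A.Lang = {w : ℕ → Bool | ∀ k : ℕ, w k = w (k + n)}) :
    2 ^ n ≤ Fintype.card Q := by
  classical
  have hn0 : 0 < n := hn
  set wf : (Fin n → Bool) → ℕ → Bool := fun f k => f ⟨k % n, Nat.mod_lt _ hn0⟩ with hwf
  have hmem : ∀ f, wf f ∈ A.Lang := by
    intro f
    rw [hA]
    intro k
    simp only [wf, Nat.add_mod_right]
  choose ρ hρ using hmem
  have hinj : Function.Injective (fun f => ρ f n) := by
    intro f g h
    simp only at h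
    by_contra hfg
    obtain ⟨k, hk⟩ : ∃ k : Fin n, f k ≠ g k := by
      by_contra h'; push_neg at h'; exact hfg (funext h')
    set w : ℕ → Bool := fun m => if m < n then wf f m else wf g m with hw
    set ρ' : ℕ → Q := fun m => if m < n then ρ f m else ρ g m with hρ'
    have hwlang : w ∈ A.Lang := by
      refine ⟨ρ', ⟨⟨?_, ?_⟩, ?_⟩⟩
      · simp only [ρ', if_pos hn0]
        exact (hρ f).1.1
      · intro m
        by_cases hm : m < n
        · have h1 : ρ' m = ρ f m := if_pos hm
          have h2 : ρ' (m + 1) = ρ f (m + 1) := by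
            by_cases hm1 : m + 1 < n
            · exact if_pos hm1
            · have : m + 1 = n := le_antisymm hm (not_lt.mp hm1)
              simp only [ρ', if_neg hm1, this, ← h, if_neg (lt_irrefl n)]
          rw [h1, h2, hw]
          simp only [if_pos hm]
          exact (hρ f).1.2 m
        · have h1 : ρ' m = ρ g m := if_neg hm
          have h2 : ρ' (m + 1) = ρ g (m + 1) := by
            apply if_neg
            omega
          rw [h1, h2, hw]
          simp only [if_neg hm]
          exact (hρ g).1.2 m
      · intro N
        obtain ⟨m, hmN, hmacc⟩ := (hρ g).2 (max N n)
        refine ⟨m, le_trans (le_max_left _ _) hmN, ?_⟩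
        have : ¬ m < n := by
          have := le_trans (le_max_right N n) hmN; omega
        simpa only [ρ', if_neg this] using hmacc
    rw [hA] at hwlang
    have hper := hwlang k.val
    have hlt : (k : ℕ) < n := k.isLt
    have h1 : w k.val = f k := by
      simp only [hw, if_pos hlt, wf]
      congr 1
      exact Fin.ext (Nat.mod_eq_of_lt hlt)
    have h2 : w (k.val + n) = g k := by
      have : ¬ (k.val + n < n) := by omega
      simp only [hw, if_neg this, wf, Nat.add_mod_right]
      congr 1
      exact Fin.ext (Nat.mod_eq_of_lt hlt)
    rw [h1, h2] at hper
    exact hk hper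
  calc 2 ^ n = Fintype.card (Fin n → Bool) := by simp
    _ ≤ Fintype.card Q := Fintype.card_le_of_injective _ hinj
end
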